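/- For every integer n ≥ 5, every seed ψ that has a parent, and every i with 1 ≤ i ≤ n−3: ψ = son(parent(ψ), i) if and only if ord(ψ) = i, where ord(ψ) is the position of the entry mis(ψ)⊕1 in ψ counted from the right end. -/

import Mathlib

/-- `σ`: cyclic left shift by one position. -/
def sig (l : List ℕ) : List ℕ := l.rotate 1

/-- `τ`: transposition of the first two entries. -/
def tau : List ℕ → List ℕ
  | a :: b :: rest => b :: a :: rest
  | l => l

/-- Apply a word over the alphabet {σ,τ} (encoded: `false` = σ, `true` = τ)
letter by letter, from left to right. -/
def applyWord (w : List Bool) (l : List ℕ) : List ℕ :=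
  w.foldl (fun p c => if c then tau p else sig p) l

/-- `l` is an n-permutation: a sequence containing each of 1,…,n exactly once. -/
def IsPerm (n : ℕ) (l : List ℕ) : Prop := l.Perm (List.range' 1 n)

/-- The permutation (n, n−1, …, 1). -/
def descList (n : ℕ) : List ℕ := (List.range n).reverse.map (· + 1)

/-- Cyclic successor ⊕1 on {1,…,n−1}. -/
def osucc (n a : ℕ) : ℕ := if a = n - 1 then 1 else a + 1

/-- Cyclic predecessor ⊖1 on {1,…,n−1}. -/
def opred (n a : ℕ) : ℕ := if a = 1 then n - 1 else a - 1

/-- From a seed (a₁, a₂, …, a_{n−1}) form (a₁, a₂⊕1, a₂, …, a_{n−1}). -/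
def seedToPerm (n : ℕ) : List ℕ → List ℕ
  | a1 :: a2 :: rest => a1 :: osucc n a2 :: a2 :: rest
  | l => l

/-- ψ is a seed: an (n−1)-tuple of distinct elements of {1,…,n} with first entry n
such that (a₁, a₂⊕1, a₂, …, a_{n−1}) is an n-permutation. -/
def IsSeed (n : ℕ) (ψ : List ℕ) : Prop :=
  ψ.length = n - 1 ∧ ψ.head? = some n ∧ IsPerm n (seedToPerm n ψ)

/-- The missing element mis(ψ) = a₂⊕1. -/
def mis (n : ℕ) (ψ : List ℕ) : ℕ := osucc n (ψ.getD 1 0)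

/-- The package perms(ψ): all permutations obtained by inserting mis(ψ)
at any position of ψ and then taking any cyclic shift. -/
def perms (n : ℕ) (ψ : List ℕ) : Set (List ℕ) :=
  { π | ∃ i j, i ≤ ψ.length ∧ π = (ψ.insertIdx i (mis n ψ)).rotate j }

/-- cycle(π): the set of cyclic shifts of π. -/
def cycle (π : List ℕ) : Set (List ℕ) := { ρ | ∃ j, ρ = π.rotate j }

/-- ψ̃ = (a₁, mis(ψ), a₂, …, a_{n−1}). -/
def tildeSeed (n : ℕ) (ψ : List ℕ) : List ℕ :=
  match ψ with
  | a1 :: rest => a1 :: mis n ψ :: rest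
  | [] => []

/-- ψ^(i) (for 1 ≤ i ≤ n−1): the right cyclic shift of ψ by i−1 positions
with mis(ψ) prepended; for i = n−1 this is (x, a₂, …, a_{n−1}, a₁). -/
def seedShift (n : ℕ) (ψ : List ℕ) (i : ℕ) : List ℕ := mis n ψ :: ψ.rotate (n - i)

/-- Length of the maximal initial run a = b⊕1 in a list. -/
def decRun (n : ℕ) : List ℕ → ℕ
  | a :: b :: rest => if a = osucc n b then decRun n (b :: rest) + 1 else 1
  | [_] => 1
  | [] => 0

/-- height(ψ): the largest k with aᵢ = a_{i+1}⊕1 for all 2 ≤ i ≤ k. -/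
def height (n : ℕ) (ψ : List ℕ) : ℕ := decRun n ψ.tail

/-- The hub seed (n, b, b⊖1, …, b⊖(n−3)). -/
def hubSeed (n b : ℕ) : List ℕ := n :: (List.range (n - 2)).map (fun j => (opred n)^[j] b)

/-- Hubₙ: the set of hub seeds. -/
def Hub (n : ℕ) : Set (List ℕ) := { ψ | ∃ b, 1 ≤ b ∧ b ≤ n - 1 ∧ ψ = hubSeed n b }

/-- `IsParent n ψ β` means ψ = parent(β): ψ, β are neighboring distinct seeds,
height(ψ) > 1 and mis(ψ) = mis(β)⊕1. -/
def IsParent (n : ℕ) (par child : List ℕ) : Prop :=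
  IsSeed n par ∧ IsSeed n child ∧ par ≠ child ∧
  (perms n par ∩ perms n child).Nonempty ∧
  1 < height n par ∧ mis n par = osucc n (mis n child)

/-- `IsSon n β ψ i` means β = son(ψ, i), i.e. β is a seed with σ^i(ψ^(i)) = β̃. -/
def IsSon (n : ℕ) (child par : List ℕ) (i : ℕ) : Prop :=
  IsSeed n child ∧ sig^[i] (seedShift n par i) = tildeSeed n child

/-- γ_k = σ^k τ. -/
def gam (k : ℕ) : List Bool := List.replicate k false ++ [true]

/-- W_0 = σ and W_k = τ · ∏_{i=1}^{n−2} σ^i W_{Δ(k,i)} γ_{n−2−i},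
where Δ(k,i) = min(k−1, n−2−i). -/
def W (n : ℕ) : ℕ → List Bool
  | 0 => [false]
  | k + 1 => true :: ((List.range (n - 2)).map (fun j =>
      List.replicate (j + 1) false ++ W n (min k (n - 2 - (j + 1))) ++
        gam (n - 2 - (j + 1)))).flatten
  termination_by k => k
  decreasing_by omega

/-- V_n = γ_{n−3} · ∏_{i=2}^{n−3} σ^i W_{Δ(n−3,i)} γ_{n−2−i} · σ^{n−1}. -/
def V (n : ℕ) : List Bool :=
  gam (n - 3) ++
  ((List.range (n - 4)).map (fun j =>
    List.replicate (j + 2) false ++ W n (min (n - 4) (n - 2 - (j + 2))) ++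
      gam (n - 2 - (j + 2)))).flatten ++
  List.replicate (n - 1) false

/-- SEQ_n = γ₁^{n−2} σ² (V_n τ)^{n−2} V_n. -/
def SEQ (n : ℕ) : List Bool :=
  (List.replicate (n - 2) (gam 1)).flatten ++ List.replicate 2 false ++
  (List.replicate (n - 2) (V n ++ [true])).flatten ++ V n

/-- r: the first element after the value n in the left-to-right cyclic reading
of π with the entry p₂ skipped. -/
def rVal (n : ℕ) (π : List ℕ) : ℕ :=
  match π with
  | p1 :: _ :: rest =>
      let l := p1 :: rest
      l.getD ((l.idxOf n + 1) % l.length) 0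
  | _ => 0

/-- The Sawada–Williams successor function `next`. -/
def swNext (n : ℕ) (π : List ℕ) : List ℕ :=
  if π = descList n then sig π
  else if π.getD 1 0 ≠ n ∧ π.getD 1 0 = osucc n (rVal n π) then tau π else sig π

/-- GEN(π, α): all permutations visited (including π) when α is applied to π. -/
def GEN (α : List Bool) (π : List ℕ) : Set (List ℕ) :=
  { ρ | ∃ t, t ≤ α.length ∧ ρ = applyWord (α.take t) π }

/-- Tree(ψ): ψ together with all seeds from which ψ is reachable by parent links. -/
def SeedTree (n : ℕ) (ψ : List ℕ) : Set (List ℕ) :=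
  { β | Relation.ReflTransGen (fun x y => IsParent n y x) β ψ }

/-- bunch(ψ) = (⋃_{β ∈ Tree(ψ)} perms(β) ∖ cycle(ψ̃)) ∪ {ψ̃, ψ^(n−1)}. -/
def bunch (n : ℕ) (ψ : List ℕ) : Set (List ℕ) :=
  ((⋃ β ∈ SeedTree n ψ, perms n β) \ cycle (tildeSeed n ψ)) ∪
    {tildeSeed n ψ, seedShift n ψ (n - 1)}

/-- rank(π): the number of initial letters of SEQ_n needed to reach π from
π₀ = τ((n, n−1, …, 1)). -/
noncomputable def rank (n : ℕ) (π : List ℕ) : ℕ :=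
  sInf { t | applyWord ((SEQ n).take t) (tau (descList n)) = π }

/-- SUM(k,j) = |τ · ∏_{i=1}^{j−1} σ^i W_{Δ(k,i)} γ_{n−2−i}| + j. -/
def SUMw (n k j : ℕ) : ℕ :=
  (true :: ((List.range (j - 1)).map (fun m =>
    List.replicate (m + 1) false ++ W n (min (k - 1) (n - 2 - (m + 1))) ++
      gam (n - 2 - (m + 1)))).flatten).length + j

/-- ord(ψ): the position of the entry mis(ψ)⊕1 in ψ, counted from the right end. -/
def ord (n : ℕ) (ψ : List ℕ) : ℕ := ψ.length - ψ.idxOf (osucc n (mis n ψ))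

/-- Length of the continuation of the maximal decreasing subsequence starting
with current value `cur`. -/
def chainLen (n : ℕ) : List ℕ → ℕ → ℕ
  | [], _ => 0
  | b :: rest, cur => if cur = osucc n b then chainLen n rest b + 1 else chainLen n rest cur

/-- level(ψ) = n − m − 3, where m+1 is the length of dec_seq(ψ). -/
def level (n : ℕ) (ψ : List ℕ) : ℕ := n - chainLen n (ψ.drop 2) (ψ.getD 1 0) - 3

/-!
Write `x = mis(φ)` and `y = mis(ψ)` for a parent `φ` of `ψ`. Normalising a common member of
the two packages to start with `n` shows that `ψ = (n, t₁, x, t₂)` and `φ = (n, y, t₁, t₂)`.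
So `φ = A ++ B` and `ψ̃ = A ++ x :: B` with `A = (n, y, t₁)`, `B = t₂`. In `σ^i(φ^(i))` the
entry `x` sits at position `n - i`, in `ψ̃` at position `|A|`; since `ψ̃` has distinct entries,
`ψ = son(φ, i)` iff `n - i = |A|`, i.e. `i = |t₂| + 1 = ord(ψ)`.
-/

namespace List

variable {α : Type*}

theorem insertIdx_eq_take_append_drop (x : α) :
    ∀ {i : ℕ} {l : List α}, i ≤ l.length → l.insertIdx i x = l.take i ++ x :: l.drop i
  | 0, _, _ => by simp
  | _ + 1, [], h => by simp at h
  | i + 1, a :: l, h => by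
    simp [insertIdx_succ_cons, insertIdx_eq_take_append_drop x (i := i) (l := l) (by simpa using h)]

theorem exists_insertIdx_cons_isRotated (z a : α) (l : List α) {j : ℕ} (hj : j ≤ l.length + 1) :
    ∃ m ≤ l.length, (a :: l).insertIdx j z ~r a :: l.insertIdx m z := by
  cases j with
  | zero => exact ⟨l.length, le_rfl, 1, by simp [insertIdx_length_self]⟩
  | succ m => exact ⟨m, by simpa using hj, by rw [insertIdx_succ_cons]⟩

theorem eq_of_cons_isRotated_cons {a : α} {l l' : List α} (hl : (a :: l).Nodup)
    (h : a :: l ~r a :: l') : l = l' := by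
  obtain ⟨k, hk⟩ := h
  rw [← rotate_mod] at hk
  have hlt : k % (a :: l).length < (a :: l).length := Nat.mod_lt _ (by simp)
  have hhead : (a :: l)[k % (a :: l).length]? = (a :: l)[0]? := by
    rw [← head?_rotate hlt, hk]; rfl
  rw [(getElem?_inj hlt hl).mp hhead, rotate_zero] at hk
  exact (cons_inj_right a).mp hk

theorem cons_rotate_rotate_eq_append_cons_iff {x : α} {A B : List α} (hnd : (A ++ x :: B).Nodup)
    {i k : ℕ} (hi : 0 < i) (hik : i + k = A.length + B.length + 1) :
    (x :: (A ++ B).rotate k).rotate i = A ++ x :: B ↔ k = A.length := by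
  constructor
  · intro h
    have hlen : (x :: (A ++ B).rotate k).length = i + k := by simp [hik]
    have hk : k < ((x :: (A ++ B).rotate k).rotate i).length := by simp [hlen]; omega
    have hx : ((x :: (A ++ B).rotate k).rotate i)[k] = x := by
      simp only [getElem_rotate, hlen, Nat.add_comm k i, Nat.mod_self, getElem_cons_zero]
    have hxA : (A ++ x :: B)[A.length]'(by simp) = x := by simp
    simp only [h] at hx hk
    exact (hnd.getElem_inj_iff).mp (hx.trans hxA.symm)
  · rintro rfl
    have hi' : i = (x :: B).length := by simp; omega
    rw [rotate_append_length_eq, ← cons_append, hi', rotate_append_length_eq]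

variable [DecidableEq α]

theorem erase_insertIdx_of_notMem {y : α} :
    ∀ {l : List α} (i : ℕ), y ∉ l → (l.insertIdx i y).erase y = l
  | _, 0, _ => by simp
  | [], _ + 1, _ => by simp
  | a :: l, i + 1, h => by
    have hay : a ≠ y := fun hay => h (hay ▸ mem_cons_self)
    rw [insertIdx_succ_cons, erase_cons_tail (by simpa using hay),
      erase_insertIdx_of_notMem i (fun hy => h (mem_cons_of_mem a hy))]

theorem erase_cons_insertIdx {x y : α} (hxy : x ≠ y) (s : List α) (i : ℕ) :
    ((y :: s).insertIdx i x).erase y = s.insertIdx (i - 1) x := by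
  cases i with
  | zero => rw [insertIdx_zero, erase_cons_tail (by simpa using hxy), erase_cons_head,
    Nat.zero_sub, insertIdx_zero]
  | succ i => simp [insertIdx_succ_cons]

end List

open List

theorem sig_iterate (i : ℕ) (l : List ℕ) : sig^[i] l = l.rotate i := by
  induction i generalizing l with
  | zero => simp
  | succ i ih => rw [Function.iterate_succ_apply, ih, sig, rotate_rotate, Nat.add_comm]

theorem osucc_inj {n a b : ℕ} (ha : 1 ≤ a) (hb : 1 ≤ b) (h : osucc n a = osucc n b) : a = b := by
  simp only [osucc] at h
  split_ifs at h <;> omega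

theorem tildeSeed_of_eq_cons {n a : ℕ} {ψ l : List ℕ} (h : ψ = a :: l) :
    tildeSeed n ψ = a :: mis n ψ :: l := by
  subst h; rfl

theorem IsSeed.exists_eq_cons_cons {n : ℕ} {ψ : List ℕ} (hs : IsSeed n ψ) :
    ∃ a t, ψ = n :: a :: t := by
  obtain ⟨hlen, hhead, hperm⟩ := hs
  rcases ψ with _ | ⟨b, _ | ⟨a, t⟩⟩
  · simp at hhead
  · have := hperm.length_eq
    simp [seedToPerm] at this hlen
    omega
  · exact ⟨a, t, by simpa using hhead⟩

theorem IsSeed.perm_tildeSeed {n : ℕ} {ψ : List ℕ} (hs : IsSeed n ψ) :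
    (tildeSeed n ψ).Perm (range' 1 n) := by
  obtain ⟨a, t, rfl⟩ := hs.exists_eq_cons_cons
  exact hs.2.2

theorem IsParent.exists_eq_cons_mis {n : ℕ} {φ ψ : List ℕ} (h : IsParent n φ ψ) :
    ∃ s, φ = n :: mis n ψ :: s := by
  obtain ⟨hφ, hψ, -, -, -, hmis⟩ := h
  obtain ⟨b, s, rfl⟩ := hφ.exists_eq_cons_cons
  have one_le {z : ℕ} (hz : z ∈ range' 1 n) : 1 ≤ z := (mem_range'_1.mp hz).1
  have hb : b ∈ range' 1 n := hφ.perm_tildeSeed.subset (by simp [tildeSeed])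
  have hy : mis n ψ ∈ range' 1 n := hψ.perm_tildeSeed.subset <| by
    obtain ⟨a, t, rfl⟩ := hψ.exists_eq_cons_cons
    simp [tildeSeed]
  exact ⟨s, by rw [osucc_inj (one_le hb) (one_le hy) hmis]⟩

theorem IsParent.exists_split {n : ℕ} {φ ψ : List ℕ} (h : IsParent n φ ψ) :
    ∃ t₁ t₂, ψ = n :: (t₁ ++ mis n φ :: t₂) ∧ φ = n :: mis n ψ :: (t₁ ++ t₂) := by
  obtain ⟨s, hφs⟩ := h.exists_eq_cons_mis
  obtain ⟨hφ, hψ, -, ⟨π, hπφ, hπψ⟩, -, -⟩ := h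
  obtain ⟨a, t, rfl⟩ := hψ.exists_eq_cons_cons
  subst hφs
  set y := mis n (n :: a :: t)
  set x := mis n (n :: y :: s)
  have hNψ : (n :: y :: a :: t).Nodup := hψ.perm_tildeSeed.nodup_iff.mpr nodup_range'
  have hNφ : (n :: x :: y :: s).Nodup := hφ.perm_tildeSeed.nodup_iff.mpr nodup_range'
  have hya : y ∉ a :: t := hNψ.of_cons.notMem
  have hxy : x ≠ y := ne_of_not_mem_cons hNφ.of_cons.notMem
  -- Rotate both members of the common package to start with `n`: the remaining parts agree,
  -- and erasing `y` from them gives back `a :: t`.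
  obtain ⟨j, k, hj, rfl⟩ := hπψ
  obtain ⟨j', k', hj', hπ⟩ := hπφ
  obtain ⟨m, hm, hrotψ⟩ := exists_insertIdx_cons_isRotated y n (a :: t) (by simpa using hj)
  obtain ⟨m', hm', hrotφ⟩ := exists_insertIdx_cons_isRotated x n (y :: s) (by simpa using hj')
  have hrot : n :: (a :: t).insertIdx m y ~r n :: (y :: s).insertIdx m' x :=
    hrotψ.symm.trans ((IsRotated.forall _ k).symm.trans (hπ ▸ (IsRotated.forall _ k').trans hrotφ))
  have hnd : (n :: (a :: t).insertIdx m y).Nodup :=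
    ((perm_insertIdx y (a :: t) hm).cons n).nodup_iff.mpr hNψ
  have hat : a :: t = s.insertIdx (m' - 1) x := by
    rw [← erase_insertIdx_of_notMem m hya, eq_of_cons_isRotated_cons hnd hrot,
      erase_cons_insertIdx hxy]
  refine ⟨s.take (m' - 1), s.drop (m' - 1), ?_, by rw [take_append_drop]⟩
  rw [hat, insertIdx_eq_take_append_drop x (by rw [length_cons] at hm'; omega)]

theorem ord_eq_of_eq_append {n : ℕ} {ψ A B : List ℕ} (hψ : ψ = A ++ osucc n (mis n ψ) :: B)
    (hA : osucc n (mis n ψ) ∉ A) : ord n ψ = B.length + 1 := by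
  unfold ord
  generalize osucc n (mis n ψ) = x at hψ hA ⊢
  subst hψ
  simp [idxOf_append_of_notMem hA]

theorem son_iff_ord_general (n : ℕ) (φ ψ : List ℕ) (hpar : IsParent n φ ψ)
    (i : ℕ) (h1 : 1 ≤ i) (h2 : i ≤ n - 3) :
    IsSon n ψ φ i ↔ ord n ψ = i := by
  obtain ⟨t₁, t₂, hψ, hφ⟩ := hpar.exists_split
  obtain ⟨-, hseed, -, -, -, hx⟩ := hpar
  rw [IsSon, and_iff_right hseed, sig_iterate, seedShift]
  set x := mis n φ
  set y := mis n ψ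
  have htilde : tildeSeed n ψ = (n :: y :: t₁) ++ x :: t₂ := tildeSeed_of_eq_cons hψ
  have hperm := htilde ▸ hseed.perm_tildeSeed
  have hnd := hperm.nodup_iff.mpr nodup_range'
  have hlen := hperm.length_eq
  simp only [length_append, length_cons, length_range'] at hlen
  have hxt₁ : x ∉ n :: t₁ := fun hmem => (nodup_middle.mp hnd).notMem (by simp at hmem ⊢; tauto)
  have hord : ord n ψ = t₂.length + 1 := ord_eq_of_eq_append (hx ▸ hψ) (hx ▸ hxt₁)
  rw [show φ = (n :: y :: t₁) ++ t₂ from hφ, htilde,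
    cons_rotate_rotate_eq_append_cons_iff hnd (k := n - i) (by omega) (by simp; omega), hord]
  simp only [length_cons]
  omega

/-- for a seed ψ with parent φ and 1 ≤ i ≤ n−3,
ψ = son(φ, i) iff ord(ψ) = i. -/
theorem son_iff_ord (n : ℕ) (hn : 5 ≤ n) (φ ψ : List ℕ) (hpar : IsParent n φ ψ)
    (i : ℕ) (h1 : 1 ≤ i) (h2 : i ≤ n - 3) :
    IsSon n ψ φ i ↔ ord n ψ = i :=
  son_iff_ord_general n φ ψ hpar i h1 h2
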